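/- arXiv:1809.02404 — 3 statements merged into one kernel-verified Lean document; each statement's English description precedes it below -/
import Mathlib

section
/- Let F be a finite group and Σ ⊆ F a generating subset. Then either there exists N ∈ ℕ such that Σ^N = F, or Σ is contained in a single coset of a proper subgroup of F containing the commutator subgroup [F,F]. -/
/-!
Fix `s ∈ Σ` and let `n = |F|`. Since `t⁻¹ = t ^ (n - 1)` for every `t`, the set `H = Σ ^ n` is a
subgroup (Mathlib's `powCardSubgroup`), it contains `s⁻¹ t = s ^ (n - 1) t` for all `t ∈ Σ`, and
conjugating it by `t ∈ Σ` lands in `Σ ^ (2n) = H`, so `H` is normal. Thus `Σ ⊆ s H` and `F / H` is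
generated by the image of `s`, hence cyclic, so `[F, F] ≤ H`. Either `H = F`, i.e. `Σ ^ n = F`,
or `H` is the required proper subgroup.
-/

open Pointwise

section FiniteGroup

variable {G : Type*} [Group G] [Fintype G] {S : Set G}

theorem Set.inv_mem_pow_card_sub_one {t : G} (ht : t ∈ S) : t⁻¹ ∈ S ^ (Fintype.card G - 1) := by
  have : t ^ (Fintype.card G - 1) = t⁻¹ :=
    eq_inv_of_mul_eq_one_left <| by rw [pow_sub_one_mul Fintype.card_ne_zero, pow_card_eq_one]
  exact this ▸ Set.pow_mem_pow ht

theorem Set.inv_mul_mem_pow_card {s t : G} (hs : s ∈ S) (ht : t ∈ S) :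
    s⁻¹ * t ∈ S ^ Fintype.card G := by
  have := Set.mul_mem_mul (Set.inv_mem_pow_card_sub_one hs) ht
  rwa [← pow_succ, Nat.sub_add_cancel Fintype.card_pos] at this

theorem Set.conj_mem_pow_add_card {t x : G} {m : ℕ} (ht : t ∈ S) (hx : x ∈ S ^ m) :
    t * x * t⁻¹ ∈ S ^ (m + Fintype.card G) := by
  have := Set.mul_mem_mul (Set.mul_mem_mul ht hx) (Set.inv_mem_pow_card_sub_one ht)
  rwa [← pow_succ', ← pow_add, Nat.add_assoc, Nat.add_sub_cancel' Fintype.card_pos] at this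

theorem subset_smul_powCardSubgroup (hS : S.Nonempty) {s : G} (hs : s ∈ S) :
    S ⊆ s • (powCardSubgroup S hS : Set G) := fun t ht ↦ by
  rw [Set.mem_smul_set_iff_inv_smul_mem, coe_powCardSubgroup]
  exact Set.inv_mul_mem_pow_card hs ht

theorem conj_mem_powCardSubgroup (hS : S.Nonempty) {t x : G} (ht : t ∈ S)
    (hx : x ∈ powCardSubgroup S hS) : t * x * t⁻¹ ∈ powCardSubgroup S hS := by
  rw [← SetLike.mem_coe, coe_powCardSubgroup] at hx
  have hconj := Set.conj_mem_pow_add_card ht hx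
  rw [pow_add, ← coe_powCardSubgroup S hS] at hconj
  obtain ⟨a, ha, b, hb, hab⟩ := hconj
  exact hab ▸ mul_mem ha hb

end FiniteGroup

theorem Subgroup.normal_of_conj_mem_of_closure_eq_top {G : Type*} [Group G] [Finite G]
    {S : Set G} (hS : Subgroup.closure S = ⊤) {H : Subgroup G}
    (hconj : ∀ t ∈ S, ∀ x ∈ H, t * x * t⁻¹ ∈ H) : H.Normal where
  conj_mem x hx g := by
    have hg : g ∈ Submonoid.closure S := by
      rw [← Subgroup.closure_toSubmonoid_of_finite, hS]; trivial
    induction hg using Submonoid.closure_induction generalizing x with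
    | mem t ht => exact hconj t ht x hx
    | one => simpa using hx
    | mul a b _ _ iha ihb =>
      rw [mul_inv_rev, show a * b * x * (b⁻¹ * a⁻¹) = a * (b * x * b⁻¹) * a⁻¹ by group]
      exact iha _ (ihb x hx)

theorem commutator_le_of_subset_smul_of_closure_eq_top {G : Type*} [Group G] {S : Set G}
    (hS : Subgroup.closure S = ⊤) {N : Subgroup G} [N.Normal] {a : G}
    (hSa : S ⊆ a • (N : Set G)) : commutator G ≤ N := by
  rw [← Subgroup.Normal.quotient_commutative_iff_commutator_le]
  suffices IsCyclic (G ⧸ N) from inferInstance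
  refine isCyclic_iff_exists_zpowers_eq_top.mpr ⟨a, top_unique ?_⟩
  have hS' : QuotientGroup.mk' N '' S ⊆ {(a : G ⧸ N)} := by
    rintro _ ⟨t, ht, rfl⟩
    obtain ⟨x, hx, rfl⟩ := hSa ht
    simpa [QuotientGroup.eq_one_iff] using hx
  calc ⊤ = (⊤ : Subgroup G).map (QuotientGroup.mk' N) :=
        (Subgroup.map_top_of_surjective _ (QuotientGroup.mk'_surjective N)).symm
    _ = Subgroup.closure (QuotientGroup.mk' N '' S) := by rw [← hS, MonoidHom.map_closure]
    _ ≤ Subgroup.closure {(a : G ⧸ N)} := Subgroup.closure_mono hS'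
    _ = Subgroup.zpowers (a : G ⧸ N) := (Subgroup.zpowers_eq_closure _).symm

/-- For a generating subset `Σ` of a finite group `F`, either some power `Σ^N` is all of `F`,
or `Σ` is contained in a single coset of a proper subgroup of `F` containing `[F,F]`. -/
theorem finite_group_power_fills_or_coset {F : Type*} [Group F] [Finite F] (Sig : Set F)
    (hgen : Subgroup.closure Sig = ⊤) :
    (∃ N : ℕ, Sig ^ N = (Set.univ : Set F)) ∨
      ∃ (H : Subgroup F) (a : F), H ≠ ⊤ ∧ commutator F ≤ H ∧ Sig ⊆ a • (H : Set F) := by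
  cases nonempty_fintype F
  obtain rfl | hne := Sig.eq_empty_or_nonempty
  · rw [Subgroup.closure_empty] at hgen
    refine .inl ⟨0, Set.eq_univ_of_forall fun x ↦ ?_⟩
    simpa using Subgroup.mem_bot.mp (hgen ▸ Subgroup.mem_top x)
  have ⟨s, hs⟩ := hne
  set H := powCardSubgroup Sig hne
  have hsub : Sig ⊆ s • (H : Set F) := subset_smul_powCardSubgroup hne hs
  by_cases hH : H = ⊤
  · exact .inl ⟨Fintype.card F, by rw [← coe_powCardSubgroup Sig hne, ← Subgroup.coe_top, ← hH]⟩
  have : H.Normal := Subgroup.normal_of_conj_mem_of_closure_eq_top hgen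
    fun t ht x hx ↦ conj_mem_powCardSubgroup hne ht hx
  exact .inr ⟨H, s, hH, commutator_le_of_subset_smul_of_closure_eq_top hgen hsub, hsub⟩
end

section
/- Let g = diag(μ₁,…,μ_d) ∈ GL_d(ℝ) be a diagonal matrix with max_{i>1}|μ_i| ≤ (1−2η)|μ₁| for some η ∈ (0,1), and let ε > 0 be small enough that (1−2η)/(1−ε²) < 1 − (3/2)η. Then for all [x],[y] in the ball B([e₁],ε) ⊂ ℙ(ℝ^d) (in the standard metric), d(g[x], g[y]) ≤ (1 − (3/2)η) · d([x],[y]). -/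
open Matrix

/-- The standard metric on projective space, on nonzero representative vectors. -/
noncomputable def projDist {V : Type*} [NormedAddCommGroup V] [InnerProductSpace ℝ V]
    (x y : V) : ℝ :=
  Real.sqrt (‖x‖ ^ 2 * ‖y‖ ^ 2 - (inner ℝ x y : ℝ) ^ 2) / (‖x‖ * ‖y‖)

/-- Action of a matrix on Euclidean space. -/
noncomputable def mulVecE {d : ℕ} (g : Matrix (Fin d) (Fin d) ℝ)
    (x : EuclideanSpace ℝ (Fin d)) : EuclideanSpace ℝ (Fin d) :=
  (WithLp.equiv 2 (Fin d → ℝ)).symm (g *ᵥ (WithLp.equiv 2 (Fin d → ℝ)) x)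

/-- The line `[e₁]` of the first standard basis vector, in Euclidean space. -/
noncomputable def e₁ (d : ℕ) [NeZero d] : EuclideanSpace ℝ (Fin d) :=
  EuclideanSpace.single (0 : Fin d) (1 : ℝ)

/-!
In Plücker coordinates, `g = diag(μ)` multiplies the `(i, j)` coordinate of `x ∧ y` by `μᵢ μⱼ`,
and for `i ≠ j` at least one index differs from the first, so `|μᵢ μⱼ| ≤ (1 − 2η) μ₁²`; hence
`‖gx ∧ gy‖ ≤ (1 − 2η) μ₁² ‖x ∧ y‖`. Near `[e₁]` the first coordinate carries most of the norm,
`x₁² ≥ (1 − ε²)‖x‖²`, so `‖gx‖ ≥ |μ₁| √(1 − ε²) ‖x‖`. Dividing, `g` contracts the ball with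
ratio `(1 − 2η)/(1 − ε²) < 1 − (3/2)η`.
-/

section InnerProductSpace

variable {V : Type*} [NormedAddCommGroup V] [InnerProductSpace ℝ V]

/-- `‖x ∧ y‖²`, as the Gram determinant of `x` and `y`. -/
noncomputable def wedgeSq (x y : V) : ℝ :=
  ‖x‖ ^ 2 * ‖y‖ ^ 2 - inner ℝ x y ^ 2

lemma wedgeSq_nonneg (x y : V) : 0 ≤ wedgeSq x y := by
  rw [wedgeSq, sub_nonneg, ← mul_pow, ← sq_abs]
  exact pow_le_pow_left₀ (abs_nonneg _) (abs_real_inner_le_norm x y) 2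

lemma projDist_eq (x y : V) : projDist x y = √(wedgeSq x y) / (‖x‖ * ‖y‖) := rfl

lemma projDist_nonneg (x y : V) : 0 ≤ projDist x y := by
  rw [projDist_eq]
  positivity

lemma projDist_sq (x y : V) : projDist x y ^ 2 = wedgeSq x y / (‖x‖ ^ 2 * ‖y‖ ^ 2) := by
  rw [projDist_eq, div_pow, mul_pow, Real.sq_sqrt (wedgeSq_nonneg x y)]

lemma mul_norm_sq_le_inner_sq_of_projDist_le {x e : V} (hx : x ≠ 0) (he : ‖e‖ = 1) {ε : ℝ}
    (h : projDist x e ≤ ε) : (1 - ε ^ 2) * ‖x‖ ^ 2 ≤ inner ℝ x e ^ 2 := by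
  have h2 : projDist x e ^ 2 ≤ ε ^ 2 := pow_le_pow_left₀ (projDist_nonneg x e) h 2
  rw [projDist_sq, wedgeSq, he, div_le_iff₀ (by positivity)] at h2
  linarith

lemma projDist_le_mul_of_wedgeSq_le {x y u v : V} (hx : x ≠ 0) (hy : y ≠ 0) {a b k : ℝ}
    (ha : 0 < a) (hb : 0 < b) (hk : 0 ≤ k) (hu : a * ‖x‖ ^ 2 ≤ ‖u‖ ^ 2)
    (hv : b * ‖y‖ ^ 2 ≤ ‖v‖ ^ 2) (hw : wedgeSq u v ≤ k ^ 2 * (a * b) * wedgeSq x y) :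
    projDist u v ≤ k * projDist x y := by
  have hx2 : 0 < a * ‖x‖ ^ 2 := by positivity
  have hy2 : 0 < b * ‖y‖ ^ 2 := by positivity
  refine (pow_le_pow_iff_left₀ (projDist_nonneg u v)
    (mul_nonneg hk (projDist_nonneg x y)) two_ne_zero).1 ?_
  calc projDist u v ^ 2 = wedgeSq u v / (‖u‖ ^ 2 * ‖v‖ ^ 2) := projDist_sq u v
    _ ≤ k ^ 2 * (a * b) * wedgeSq x y / (a * ‖x‖ ^ 2 * (b * ‖y‖ ^ 2)) :=
        div_le_div₀ (mul_nonneg (by positivity) (wedgeSq_nonneg x y)) hw (by positivity)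
          (mul_le_mul hu hv hy2.le (sq_nonneg _))
    _ = (k * projDist x y) ^ 2 := by
        rw [mul_pow, projDist_sq]
        field_simp

end InnerProductSpace

section EuclideanSpace

variable {ι : Type*} [Fintype ι]

lemma wedgeSq_eq_sum (x y : EuclideanSpace ℝ ι) :
    wedgeSq x y = (∑ i, ∑ j, (x i * y j - x j * y i) ^ 2) / 2 := by
  have hinner : inner ℝ x y = ∑ i, x i * y i := by
    simp [PiLp.inner_apply, mul_comm]
  have hterm : ∀ i j, (x i * y j - x j * y i) ^ 2
      = x i ^ 2 * y j ^ 2 + x j ^ 2 * y i ^ 2 - 2 * (x i * y i * (x j * y j)) := by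
    intros; ring
  simp only [hterm, Finset.sum_add_distrib, Finset.sum_sub_distrib]
  rw [Finset.sum_comm (f := fun i j => x j ^ 2 * y i ^ 2), wedgeSq, hinner,
    EuclideanSpace.real_norm_sq_eq, EuclideanSpace.real_norm_sq_eq]
  simp only [← Finset.mul_sum, ← Finset.sum_mul]
  ring

lemma projDist_eq_zero_of_subsingleton [Subsingleton ι] (x y : EuclideanSpace ℝ ι) :
    projDist x y = 0 := by
  have hw : wedgeSq x y = 0 := by
    rw [wedgeSq_eq_sum, Finset.sum_eq_zero fun i _ => Finset.sum_eq_zero fun j _ => by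
      rw [Subsingleton.elim j i, sub_self, sq, mul_zero], zero_div]
  rw [projDist_eq, hw, Real.sqrt_zero, zero_div]

end EuclideanSpace

lemma abs_mul_le_of_forall_ne_abs_le {ι : Type*} {μ : ι → ℝ} {i₀ : ι} {r : ℝ} (hr0 : 0 ≤ r)
    (hr1 : r ≤ 1)
    (hμ : ∀ i, i ≠ i₀ → |μ i| ≤ r * |μ i₀|) {i j : ι} (hij : i ≠ j) :
    |μ i * μ j| ≤ r * μ i₀ ^ 2 := by
  have hle : ∀ k, |μ k| ≤ |μ i₀| := fun k => by
    rcases eq_or_ne k i₀ with rfl | hk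
    · exact le_rfl
    · exact (hμ k hk).trans (mul_le_of_le_one_left (abs_nonneg _) hr1)
  have key : ∀ i j, i ≠ i₀ → |μ i| * |μ j| ≤ r * μ i₀ ^ 2 := fun i j hi => by
    rw [← sq_abs (μ i₀), sq, ← mul_assoc]
    exact mul_le_mul (hμ i hi) (hle j) (abs_nonneg _) (by positivity)
  rw [abs_mul]
  rcases eq_or_ne i i₀ with rfl | hi
  · rw [mul_comm]
    exact key j i hij.symm
  · exact key i j hi

section Diagonal

variable {d : ℕ}

lemma mulVecE_diagonal_apply (μ : Fin d → ℝ) (x : EuclideanSpace ℝ (Fin d)) (i : Fin d) :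
    mulVecE (diagonal μ) x i = μ i * x i := by
  simp [mulVecE, mulVec_diagonal]

lemma wedgeSq_mulVecE_diagonal_le {μ : Fin d → ℝ} {C : ℝ}
    (hC : ∀ i j, i ≠ j → |μ i * μ j| ≤ C) (x y : EuclideanSpace ℝ (Fin d)) :
    wedgeSq (mulVecE (diagonal μ) x) (mulVecE (diagonal μ) y) ≤ C ^ 2 * wedgeSq x y := by
  simp only [wedgeSq_eq_sum, mulVecE_diagonal_apply, mul_div_assoc', Finset.mul_sum]
  gcongr with i _ j _
  rcases eq_or_ne i j with rfl | hij
  · simp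
  · calc (μ i * x i * (μ j * y j) - μ j * x j * (μ i * y i)) ^ 2
          = |μ i * μ j| ^ 2 * (x i * y j - x j * y i) ^ 2 := by rw [sq_abs]; ring
      _ ≤ C ^ 2 * (x i * y j - x j * y i) ^ 2 := by gcongr; exact hC i j hij

variable [NeZero d]

lemma mul_norm_sq_le_norm_sq_mulVecE_diagonal {μ : Fin d → ℝ} {ε : ℝ}
    {x : EuclideanSpace ℝ (Fin d)} (hx : x ≠ 0) (hxε : projDist x (e₁ d) ≤ ε) :
    (1 - ε ^ 2) * μ 0 ^ 2 * ‖x‖ ^ 2 ≤ ‖mulVecE (diagonal μ) x‖ ^ 2 := by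
  have hball : (1 - ε ^ 2) * ‖x‖ ^ 2 ≤ x 0 ^ 2 := by
    simpa [e₁, EuclideanSpace.inner_single_right] using
      mul_norm_sq_le_inner_sq_of_projDist_le hx (by simp [e₁]) hxε
  calc (1 - ε ^ 2) * μ 0 ^ 2 * ‖x‖ ^ 2 ≤ μ 0 ^ 2 * x 0 ^ 2 := by nlinarith [sq_nonneg (μ 0)]
    _ = ‖mulVecE (diagonal μ) x 0‖ ^ 2 := by
        rw [mulVecE_diagonal_apply, Real.norm_eq_abs, sq_abs, mul_pow]
    _ ≤ ‖mulVecE (diagonal μ) x‖ ^ 2 := by gcongr; exact PiLp.norm_apply_le _ _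

theorem projDist_mulVecE_diagonal_le {μ : Fin d → ℝ} (hμ0 : μ 0 ≠ 0) {r ε : ℝ} (hr0 : 0 ≤ r)
    (hr1 : r ≤ 1) (hμ : ∀ i, i ≠ 0 → |μ i| ≤ r * |μ 0|) (hε1 : ε < 1)
    {x y : EuclideanSpace ℝ (Fin d)} (hx : x ≠ 0) (hxε : projDist x (e₁ d) ≤ ε) (hy : y ≠ 0)
    (hyε : projDist y (e₁ d) ≤ ε) :
    projDist (mulVecE (diagonal μ) x) (mulVecE (diagonal μ) y) ≤
      r / (1 - ε ^ 2) * projDist x y := by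
  have hε0 : 0 ≤ ε := (projDist_nonneg x _).trans hxε
  have hε2 : 0 < 1 - ε ^ 2 := by nlinarith
  have ha : 0 < (1 - ε ^ 2) * μ 0 ^ 2 := by positivity
  refine projDist_le_mul_of_wedgeSq_le hx hy ha ha (by positivity)
    (mul_norm_sq_le_norm_sq_mulVecE_diagonal hx hxε)
    (mul_norm_sq_le_norm_sq_mulVecE_diagonal hy hyε) ?_
  calc _ ≤ (r * μ 0 ^ 2) ^ 2 * wedgeSq x y :=
        wedgeSq_mulVecE_diagonal_le (fun i j => abs_mul_le_of_forall_ne_abs_le hr0 hr1 hμ) x y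
    _ = _ := by field_simp

end Diagonal

theorem diagonal_contracts_ball_general {d : ℕ} [NeZero d] (μ : Fin d → ℝ)
    (hinv : ∀ i, μ i ≠ 0) (η : ℝ) (hη0 : 0 < η)
    (hμ : ∀ i : Fin d, i ≠ 0 → |μ i| ≤ (1 - 2 * η) * |μ 0|)
    (ε : ℝ) (hε1 : ε < 1)
    (hsmall : (1 - 2 * η) / (1 - ε ^ 2) < 1 - (3 / 2) * η) :
    ∀ x : EuclideanSpace ℝ (Fin d), x ≠ 0 → projDist x (e₁ d) ≤ ε →
    ∀ y : EuclideanSpace ℝ (Fin d), y ≠ 0 → projDist y (e₁ d) ≤ ε →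
      projDist (mulVecE (Matrix.diagonal μ) x) (mulVecE (Matrix.diagonal μ) y) ≤
        (1 - (3 / 2) * η) * projDist x y := by
  intro x hx hxε y hy hyε
  by_cases hd : ∃ i : Fin d, i ≠ 0
  · obtain ⟨i, hi⟩ := hd
    have hr0 : 0 < 1 - 2 * η :=
      pos_of_mul_pos_left ((abs_pos.2 (hinv i)).trans_le (hμ i hi)) (abs_nonneg _)
    calc _ ≤ (1 - 2 * η) / (1 - ε ^ 2) * projDist x y :=
          projDist_mulVecE_diagonal_le (hinv 0) hr0.le (by linarith) hμ hε1 hx hxε hy hyε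
      _ ≤ _ := mul_le_mul_of_nonneg_right hsmall.le (projDist_nonneg x y)
  · simp only [not_exists, not_not] at hd
    have : Subsingleton (Fin d) := ⟨fun a b => (hd a).trans (hd b).symm⟩
    simp [projDist_eq_zero_of_subsingleton]

/-- A diagonal matrix `g = diag(μ₁,…,μ_d)` with `max_{i>1}|μᵢ| ≤ (1−2η)|μ₁|` contracts the
`ε`-ball around `[e₁]` in projective space with ratio `1 − (3/2)η`, provided
`(1−2η)/(1−ε²) < 1 − (3/2)η`. -/
theorem diagonal_contracts_ball {d : ℕ} [NeZero d] (μ : Fin d → ℝ)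
    (hinv : ∀ i, μ i ≠ 0) (η : ℝ) (hη0 : 0 < η) (hη1 : η < 1)
    (hμ : ∀ i : Fin d, i ≠ 0 → |μ i| ≤ (1 - 2 * η) * |μ 0|)
    (ε : ℝ) (hε0 : 0 < ε) (hε1 : ε < 1)
    (hsmall : (1 - 2 * η) / (1 - ε ^ 2) < 1 - (3 / 2) * η) :
    ∀ x : EuclideanSpace ℝ (Fin d), x ≠ 0 → projDist x (e₁ d) ≤ ε →
    ∀ y : EuclideanSpace ℝ (Fin d), y ≠ 0 → projDist y (e₁ d) ≤ ε →
      projDist (mulVecE (Matrix.diagonal μ) x) (mulVecE (Matrix.diagonal μ) y) ≤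
        (1 - (3 / 2) * η) * projDist x y :=
  diagonal_contracts_ball_general μ hinv η hη0 hμ ε hε1 hsmall
end

section
/- Let a = [[1,1],[0,1]] and b = [[1,0],[1,1]] in SL₂(ℝ), and for p ∈ (0,1) let μ_p = p·δ_a + (1−p)·δ_b. Let λ₁(μ_p) = lim_{n→∞} (1/n)·E[log‖X_n⋯X_1‖] be the top Lyapunov exponent of i.i.d. products with law μ_p. Then λ₁(μ_p) → 0 as p → 1⁻. -/
open Matrix

/-- `a = [[1,1],[0,1]]`. -/
noncomputable def aMat : Matrix (Fin 2) (Fin 2) ℝ := !![1, 1; 0, 1]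

/-- `b = [[1,0],[1,1]]`. -/
noncomputable def bMat : Matrix (Fin 2) (Fin 2) ℝ := !![1, 0; 1, 1]

/-- The operator (Euclidean) norm of a real matrix. -/
noncomputable def opNorm {d : ℕ} (g : Matrix (Fin d) (Fin d) ℝ) : ℝ :=
  ‖Matrix.toEuclideanCLM (𝕜 := ℝ) g‖

/-- The expectation `E[log ‖X_n ⋯ X_1‖]` for i.i.d. matrices with law
`μ_p = p δ_a + (1−p) δ_b`, written as a finite sum over words of length `n`
(`false ↦ a` with probability `p`, `true ↦ b` with probability `1−p`). -/
noncomputable def expLogNorm (n : ℕ) (p : ℝ) : ℝ :=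
  ∑ w : Fin n → Bool,
    (∏ i : Fin n, (if w i then 1 - p else p)) *
      Real.log (opNorm (((List.ofFn w).map (fun c => if c then bMat else aMat)).prod))

/-!
By Fekete's lemma the limit `λ₁(μ_p)` is bounded above by `(1/n) E_p[log ‖Y_n‖]` for every
`n ≥ 1`, and it is nonnegative: every product of `a` and `b` has nonnegative entries and
upper-left entry at least `1`, hence operator norm at least `1`. For fixed `n` the bound is a
polynomial in `p`, so it is continuous, and at `p = 1` it equals `(1/n) log ‖aⁿ‖ ≤ log (n+1) / n`,
which is small for `n` large. Hence `λ₁(μ_p)` is squeezed to `0` as `p → 1`.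
-/

open Filter Topology Finset
open scoped Matrix.Norms.L2Operator

lemma Subadditive.le_div_of_tendsto {u : ℕ → ℝ} (hu : Subadditive u) {L : ℝ}
    (hL : Tendsto (fun n => u n / n) atTop (𝓝 L)) {n : ℕ} (hn : n ≠ 0) : L ≤ u n / n := by
  have hbdd := hL.bddBelow_range
  rw [tendsto_nhds_unique hL (hu.tendsto_lim hbdd)]
  exact hu.lim_le_div hbdd hn

lemma tendsto_nhdsWithin_zero_of_nonneg_of_le {X : Type*} [TopologicalSpace X] {s : Set X}
    {x₀ : X} {φ : X → ℝ} {f : ℕ → X → ℝ} (hf : ∀ n, ContinuousWithinAt (f n) s x₀)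
    (hf₀ : Tendsto (fun n => f n x₀) atTop (𝓝 0)) (hφ₀ : ∀ x ∈ s, 0 ≤ φ x)
    (hφf : ∀ x ∈ s, ∀ n ≠ 0, φ x ≤ f n x) : Tendsto φ (𝓝[s] x₀) (𝓝 0) := by
  refine tendsto_order.2 ⟨fun a ha => ?_, fun a ha => ?_⟩
  · filter_upwards [self_mem_nhdsWithin] with x hx using ha.trans_le (hφ₀ x hx)
  · obtain ⟨n, hn, hn₀⟩ := ((hf₀.eventually_lt_const ha).and (eventually_ne_atTop 0)).exists
    filter_upwards [(hf n).eventually_lt_const hn, self_mem_nhdsWithin] with x hfx hx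
    exact (hφf x hx n hn₀).trans_lt hfx

lemma tendsto_log_natCast_add_one_div :
    Tendsto (fun n : ℕ => Real.log (n + 1) / n) atTop (𝓝 0) := by
  have hlog : (fun n : ℕ => Real.log (n + 1)) =o[atTop] fun n : ℕ => (n : ℝ) + 1 :=
    Real.isLittleO_log_id_atTop.comp_tendsto
      (tendsto_atTop_add_const_right _ 1 tendsto_natCast_atTop_atTop)
  have hlin : (fun n : ℕ => (n : ℝ) + 1) =O[atTop] fun n : ℕ => (n : ℝ) :=
    (Asymptotics.IsEquivalent.refl.add_const_of_norm_tendsto_atTop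
      (tendsto_norm_atTop_atTop.comp tendsto_natCast_atTop_atTop)).isBigO
  exact (hlog.trans_isBigO hlin).tendsto_div_nhds_zero

lemma Real.log_norm_mul_le {R : Type*} [NormedRing R] {x y : R} (h : x * y ≠ 0) :
    Real.log ‖x * y‖ ≤ Real.log ‖x‖ + Real.log ‖y‖ := by
  have hx : x ≠ 0 := left_ne_zero_of_mul h
  have hy : y ≠ 0 := right_ne_zero_of_mul h
  rw [← Real.log_mul (norm_ne_zero_iff.2 hx) (norm_ne_zero_iff.2 hy)]
  exact Real.log_le_log (norm_pos_iff.2 h) (norm_mul_le x y)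

section WordMean

variable {α : Type*} [Fintype α] {q : α → ℝ} {F : List α → ℝ}

noncomputable def wordMean (q : α → ℝ) (F : List α → ℝ) (n : ℕ) : ℝ :=
  ∑ w : Fin n → α, (∏ i, q (w i)) * F (List.ofFn w)

lemma wordMean_nonneg (hq : ∀ a, 0 ≤ q a) (hF : ∀ l, 0 ≤ F l) (n : ℕ) : 0 ≤ wordMean q F n :=
  sum_nonneg fun w _ => mul_nonneg (prod_nonneg fun i _ => hq (w i)) (hF _)

lemma wordMean_add (q : α → ℝ) (F : List α → ℝ) (m n : ℕ) :
    wordMean q F (m + n) = ∑ u : Fin m → α, ∑ v : Fin n → α,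
      ((∏ i, q (u i)) * ∏ i, q (v i)) * F (List.ofFn u ++ List.ofFn v) := by
  rw [wordMean, ← (Fin.appendEquiv m n).sum_comp, Fintype.sum_prod_type]
  refine sum_congr rfl fun u _ => sum_congr rfl fun v _ => ?_
  change (∏ i, q (Fin.append u v i)) * F (List.ofFn (Fin.append u v)) = _
  simp [Fin.prod_univ_add, List.ofFn_fin_append]

lemma wordMean_add_le (hq : ∀ a, 0 ≤ q a) (hq₁ : ∑ a, q a = 1)
    (hF : ∀ u v, F (u ++ v) ≤ F u + F v) (m n : ℕ) :
    wordMean q F (m + n) ≤ wordMean q F m + wordMean q F n := by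
  have hmass (k : ℕ) : ∑ w : Fin k → α, ∏ i, q (w i) = 1 := by
    rw [← Fintype.sum_pow, hq₁, one_pow]
  calc wordMean q F (m + n)
      ≤ ∑ u : Fin m → α, ∑ v : Fin n → α, ((∏ i, q (u i)) * ∏ i, q (v i)) *
          (F (List.ofFn u) + F (List.ofFn v)) := by
        rw [wordMean_add]
        gcongr with u _ v _
        · exact mul_nonneg (prod_nonneg fun i _ => hq _) (prod_nonneg fun i _ => hq _)
        · exact hF _ _
    _ = wordMean q F m + wordMean q F n := by
        simp only [mul_add, sum_add_distrib, wordMean]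
        congr 1
        · exact sum_congr rfl fun u _ => by rw [← sum_mul, ← mul_sum, hmass, mul_one]
        · rw [sum_comm]
          exact sum_congr rfl fun v _ => by rw [← sum_mul, ← sum_mul, hmass, one_mul]

lemma wordMean_of_dirac {a₀ : α} (hq₀ : q a₀ = 1) (hq : ∀ a ≠ a₀, q a = 0) (n : ℕ) :
    wordMean q F n = F (List.replicate n a₀) := by
  rw [wordMean, sum_eq_single (fun _ => a₀)]
  · simp [hq₀]
  · intro w _ hw
    obtain ⟨i, hi⟩ := Function.ne_iff.mp hw
    exact mul_eq_zero_of_left (prod_eq_zero (mem_univ i) (hq _ hi)) _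
  · simp

end WordMean

lemma Matrix.norm_entry_le_l2_opNorm {m n 𝕜 : Type*} [Fintype m] [Fintype n] [DecidableEq n]
    [RCLike 𝕜] (A : Matrix m n 𝕜) (i : m) (j : n) : ‖A i j‖ ≤ ‖A‖ := by
  have h := A.l2_opNorm_mulVec (EuclideanSpace.single j 1)
  simp only [PiLp.norm_single, norm_one, mul_one] at h
  refine le_trans (le_of_eq ?_) ((PiLp.norm_apply_le _ i).trans h)
  simp [mulVec_single]

def nonnegCornerSubmonoid {n : Type*} [Fintype n] [DecidableEq n] (i₀ : n) :
    Submonoid (Matrix n n ℝ) where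
  carrier := {g | (∀ i j, 0 ≤ g i j) ∧ 1 ≤ g i₀ i₀}
  one_mem' := ⟨fun i j => by by_cases h : i = j <;> simp [Matrix.one_apply, h], by simp⟩
  mul_mem' := by
    rintro g h ⟨hg, hg₀⟩ ⟨hh, hh₀⟩
    refine ⟨fun i j => sum_nonneg fun k _ => mul_nonneg (hg i k) (hh k j), ?_⟩
    calc 1 ≤ g i₀ i₀ * h i₀ i₀ := one_le_mul_of_one_le_of_one_le hg₀ hh₀
      _ ≤ (g * h) i₀ i₀ :=
        single_le_sum (f := fun k => g i₀ k * h k i₀) (fun k _ => mul_nonneg (hg i₀ k) (hh k i₀))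
          (mem_univ i₀)

lemma one_le_norm_of_mem_nonnegCornerSubmonoid {n : Type*} [Fintype n] [DecidableEq n] {i₀ : n}
    {g : Matrix n n ℝ} (hg : g ∈ nonnegCornerSubmonoid i₀) : 1 ≤ ‖g‖ :=
  hg.2.trans ((Real.le_norm_self _).trans (g.norm_entry_le_l2_opNorm i₀ i₀))

lemma aMat_mem_nonnegCornerSubmonoid : aMat ∈ nonnegCornerSubmonoid 0 :=
  ⟨fun i j => by fin_cases i <;> fin_cases j <;> simp [aMat], by simp [aMat]⟩

lemma bMat_mem_nonnegCornerSubmonoid : bMat ∈ nonnegCornerSubmonoid 0 :=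
  ⟨fun i j => by fin_cases i <;> fin_cases j <;> simp [bMat], by simp [bMat]⟩

lemma aMat_pow (n : ℕ) : aMat ^ n = 1 + (n : ℝ) • !![0, 1; 0, 0] := by
  induction n with
  | zero => simp
  | succ n ih =>
    rw [pow_succ, ih]
    ext i j
    fin_cases i <;> fin_cases j <;> simp [aMat, Matrix.mul_apply, Fin.sum_univ_two, add_comm]

lemma norm_nilpotent_le_one : ‖(!![0, 1; 0, 0] : Matrix (Fin 2) (Fin 2) ℝ)‖ ≤ 1 := by
  have h := l2_opNorm_conjTranspose_mul_self (!![0, 1; 0, 0] : Matrix (Fin 2) (Fin 2) ℝ)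
  have hd : (!![0, 1; 0, 0] : Matrix (Fin 2) (Fin 2) ℝ)ᴴ * !![0, 1; 0, 0] = diagonal ![0, 1] := by
    ext i j
    fin_cases i <;> fin_cases j <;> simp [Matrix.mul_apply, Fin.sum_univ_two]
  rw [hd, l2_opNorm_diagonal] at h
  have h1 : ‖(![0, 1] : Fin 2 → ℝ)‖ ≤ 1 := by
    rw [pi_norm_le_iff_of_nonneg zero_le_one]
    simp [Fin.forall_fin_two]
  nlinarith [norm_nonneg (!![0, 1; 0, 0] : Matrix (Fin 2) (Fin 2) ℝ)]

lemma norm_aMat_pow_le (n : ℕ) : ‖aMat ^ n‖ ≤ n + 1 := by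
  rw [aMat_pow]
  calc _ ≤ ‖(1 : Matrix (Fin 2) (Fin 2) ℝ)‖ + ‖(n : ℝ) • !![(0 : ℝ), 1; 0, 0]‖ := norm_add_le _ _
    _ ≤ 1 + n * 1 := by
        rw [norm_smul, norm_one, Real.norm_natCast]
        gcongr
        exact norm_nilpotent_le_one
    _ = n + 1 := by ring

noncomputable def wordProd (l : List Bool) : Matrix (Fin 2) (Fin 2) ℝ :=
  (l.map fun c => if c then bMat else aMat).prod

lemma wordProd_append (u v : List Bool) : wordProd (u ++ v) = wordProd u * wordProd v := by
  simp [wordProd]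

lemma wordProd_mem_nonnegCornerSubmonoid (l : List Bool) :
    wordProd l ∈ nonnegCornerSubmonoid 0 := by
  refine Submonoid.list_prod_mem _ fun g hg => ?_
  obtain ⟨c, -, rfl⟩ := List.mem_map.1 hg
  cases c
  · exact aMat_mem_nonnegCornerSubmonoid
  · exact bMat_mem_nonnegCornerSubmonoid

lemma one_le_norm_wordProd (l : List Bool) : 1 ≤ ‖wordProd l‖ :=
  one_le_norm_of_mem_nonnegCornerSubmonoid (wordProd_mem_nonnegCornerSubmonoid l)

lemma expLogNorm_eq_wordMean (n : ℕ) (p : ℝ) :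
    expLogNorm n p =
      wordMean (fun c => if c then 1 - p else p) (fun l => Real.log ‖wordProd l‖) n := rfl

lemma expLogNorm_nonneg {p : ℝ} (hp₀ : 0 ≤ p) (hp₁ : p ≤ 1) (n : ℕ) : 0 ≤ expLogNorm n p :=
  expLogNorm_eq_wordMean n p ▸ wordMean_nonneg (fun c => by cases c <;> simp <;> linarith)
    (fun l => Real.log_nonneg (one_le_norm_wordProd l)) n

lemma subadditive_expLogNorm {p : ℝ} (hp₀ : 0 ≤ p) (hp₁ : p ≤ 1) :
    Subadditive (expLogNorm · p) := by
  intro m n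
  simp only [expLogNorm_eq_wordMean]
  refine wordMean_add_le (fun c => by cases c <;> simp <;> linarith) (by simp) (fun u v => ?_) m n
  rw [wordProd_append]
  refine Real.log_norm_mul_le (norm_pos_iff.1 ?_)
  rw [← wordProd_append]
  exact one_pos.trans_le (one_le_norm_wordProd _)

lemma continuous_expLogNorm (n : ℕ) : Continuous (expLogNorm n) :=
  continuous_finsetSum _ fun w _ => (continuous_finsetProd _ fun i _ =>
    Continuous.if_const _ (by fun_prop) (by fun_prop)).mul continuous_const

lemma expLogNorm_one (n : ℕ) : expLogNorm n 1 = Real.log ‖aMat ^ n‖ := by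
  rw [expLogNorm_eq_wordMean, wordMean_of_dirac (a₀ := false) (by simp) (by simp)]
  simp [wordProd, List.map_replicate, List.prod_replicate]

lemma tendsto_expLogNorm_one_div : Tendsto (fun n : ℕ => expLogNorm n 1 / n) atTop (𝓝 0) := by
  have ha (n : ℕ) : 1 ≤ ‖aMat ^ n‖ :=
    one_le_norm_of_mem_nonnegCornerSubmonoid (pow_mem aMat_mem_nonnegCornerSubmonoid n)
  refine squeeze_zero (fun n => ?_) (fun n => ?_) tendsto_log_natCast_add_one_div <;>
    rw [expLogNorm_one]
  · exact div_nonneg (Real.log_nonneg (ha n)) n.cast_nonneg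
  · gcongr
    · exact one_pos.trans_le (ha n)
    · exact norm_aMat_pow_le n

/-- The top Lyapunov exponent `λ₁(μ_p) = lim (1/n) E[log‖X_n⋯X_1‖]` of the i.i.d. random
products with law `μ_p` tends to `0` as `p → 1⁻` (within `(0,1)`). -/
theorem lyapunov_tendsto_zero (φ : ℝ → ℝ)
    (hφ : ∀ p : ℝ, 0 < p → p < 1 →
      Filter.Tendsto (fun n : ℕ => expLogNorm n p / n) Filter.atTop (nhds (φ p))) :
    Filter.Tendsto φ (nhdsWithin 1 (Set.Ioo (0 : ℝ) 1)) (nhds 0) := by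
  refine tendsto_nhdsWithin_zero_of_nonneg_of_le (f := fun n p => expLogNorm n p / n)
    (fun n => ((continuous_expLogNorm n).div_const _).continuousWithinAt)
    tendsto_expLogNorm_one_div (fun p ⟨hp₀, hp₁⟩ => ?_) fun p ⟨hp₀, hp₁⟩ n hn => ?_
  · exact ge_of_tendsto' (hφ p hp₀ hp₁) fun n =>
      div_nonneg (expLogNorm_nonneg hp₀.le hp₁.le n) n.cast_nonneg
  · exact (subadditive_expLogNorm hp₀.le hp₁.le).le_div_of_tendsto (hφ p hp₀ hp₁) hn
end
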